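/- Let k be a real parameter with k² < 1. For all real numbers u, α, β, setting θ = (β−α)/2, the following identity of Jacobi elliptic functions holds: (1 + cn(θ|k)) · ( cn((u−β)/2 | k) − cn((u−α)/2 | k) ) = sn(θ|k) · ( sn((u−α)/2 | k)·dn((u−β)/2 | k) + sn((u−β)/2 | k)·dn((u−α)/2 | k) ). (This identity, a consequence of the addition formula for cn, is the key computation showing that the one-parameter family of functions g is in the kernel of the Kasteleyn operator of the Fisher graph of an isoradial graph.) -/

import Mathlib

/-!
The identity is an algebraic consequence of the subtraction formulas
`sn (x - y) Δ = sn x cn y dn y - sn y cn x dn x` and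
`cn (x - y) Δ = cn x cn y + sn x sn y dn x dn y`, where `Δ = 1 - m sn² x sn² y`, taken at
`x = (u - α)/2`, `y = (u - β)/2` and reduced modulo `sn² + cn² = 1` and `dn² = 1 - m sn²`.

To prove a subtraction formula, fix `θ = x - y` and regard both sides as functions of `x`: the
Wronskian of the right-hand side and `Δ` vanishes, so their ratio is constant and equals its value
at `x = θ`. The derivatives `sn' = cn dn`, `cn' = -sn dn`, `dn' = -m sn cn` all come from
`am' = dn`, obtained by inverting the incomplete elliptic integral of the first kind, which is a
strictly increasing bijection of `ℝ` whenever `m < 1`.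
-/

open Real Filter

/-- Complete elliptic integral of the first kind `K`, as a function of the
squared modulus `m = k²`. -/
noncomputable def ellK (m : ℝ) : ℝ :=
  ∫ τ in (0:ℝ)..(π/2), 1 / Real.sqrt (1 - m * Real.sin τ ^ 2)

/-- The incomplete elliptic integral of the first kind
`φ ↦ ∫₀^φ (1 - k² sin² t)^{-1/2} dt`, as a function of the squared modulus `m = k²`. -/
noncomputable def amF (m φ : ℝ) : ℝ :=
  ∫ t in (0:ℝ)..φ, 1 / Real.sqrt (1 - m * Real.sin t ^ 2)

/-- Jacobi's amplitude, the inverse of `amF m`, squared modulus `m = k²`. -/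
noncomputable def am (m u : ℝ) : ℝ := Function.invFun (amF m) u

/-- Jacobi elliptic function `sn`, squared modulus `m = k²`. -/
noncomputable def sn (u m : ℝ) : ℝ := Real.sin (am m u)

/-- Jacobi elliptic function `cn`, squared modulus `m = k²`. -/
noncomputable def cn (u m : ℝ) : ℝ := Real.cos (am m u)

/-- Jacobi elliptic function `dn`, squared modulus `m = k²`. -/
noncomputable def dn (u m : ℝ) : ℝ := Real.sqrt (1 - m * sn u m ^ 2)

/-- Jacobi elliptic function `sc = sn/cn`, squared modulus `m = k²`. -/
noncomputable def sc (u m : ℝ) : ℝ := sn u m / cn u m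

theorem one_sub_mul_pos_of_lt_one {m a : ℝ} (hm : m < 1) (ha₀ : 0 ≤ a) (ha₁ : a ≤ 1) :
    0 < 1 - m * a := by
  rcases le_or_gt m 0 with h | h
  · nlinarith [mul_nonpos_of_nonpos_of_nonneg h ha₀]
  · nlinarith [mul_le_of_le_one_right h.le ha₁]

theorem mul_eq_mul_of_wronskian_eq_zero {𝕜 : Type*} [RCLike 𝕜] {N D N' D' : 𝕜 → 𝕜}
    (hN : ∀ x, HasDerivAt N (N' x) x) (hD : ∀ x, HasDerivAt D (D' x) x) (hD0 : ∀ x, D x ≠ 0)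
    (hW : ∀ x, N' x * D x = N x * D' x) (a b : 𝕜) : N a * D b = N b * D a := by
  have hratio (x : 𝕜) : HasDerivAt (fun x => N x / D x) 0 x :=
    ((hN x).div (hD x) (hD0 x)).congr_deriv (by rw [hW x, sub_self, zero_div])
  rw [← div_eq_div_iff (hD0 a) (hD0 b)]
  exact is_const_of_deriv_eq_zero (fun x => (hratio x).differentiableAt)
    (fun x => (hratio x).deriv) a b

section Amplitude

variable {m : ℝ}

theorem one_sub_mul_sin_sq_pos (hm : m < 1) (t : ℝ) : 0 < 1 - m * sin t ^ 2 :=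
  one_sub_mul_pos_of_lt_one hm (sq_nonneg _) (sin_sq_le_one t)

theorem amF_neg (φ : ℝ) : amF m (-φ) = -amF m φ := by
  have h := intervalIntegral.integral_comp_neg (a := 0) (b := φ)
    fun t => 1 / √(1 - m * sin t ^ 2)
  simp only [sin_neg, neg_sq, neg_zero] at h
  rw [amF, amF, intervalIntegral.integral_symm, h]

theorem continuous_amF_integrand (hm : m < 1) :
    Continuous fun t => 1 / √(1 - m * sin t ^ 2) :=
  continuous_const.div (by fun_prop) fun t => (sqrt_pos.2 (one_sub_mul_sin_sq_pos hm t)).ne'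

theorem hasDerivAt_amF (hm : m < 1) (φ : ℝ) :
    HasDerivAt (amF m) (1 / √(1 - m * sin φ ^ 2)) φ :=
  intervalIntegral.integral_hasDerivAt_right ((continuous_amF_integrand hm).intervalIntegrable _ _)
    ((continuous_amF_integrand hm).stronglyMeasurableAtFilter _ _)
    (continuous_amF_integrand hm).continuousAt

theorem amF_strictMono (hm : m < 1) : StrictMono (amF m) :=
  strictMono_of_hasDerivAt_pos (hasDerivAt_amF hm) fun φ =>
    one_div_pos.2 (sqrt_pos.2 (one_sub_mul_sin_sq_pos hm φ))

theorem div_sqrt_one_add_abs_le_amF (hm : m < 1) {φ : ℝ} (hφ : 0 ≤ φ) :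
    φ / √(1 + |m|) ≤ amF m φ := by
  have hbound (t : ℝ) : 1 / √(1 + |m|) ≤ 1 / √(1 - m * sin t ^ 2) := by
    refine one_div_le_one_div_of_le (sqrt_pos.2 (one_sub_mul_sin_sq_pos hm t)) (sqrt_le_sqrt ?_)
    nlinarith [neg_abs_le m, abs_nonneg m, sin_sq_le_one t, sq_nonneg (sin t)]
  calc φ / √(1 + |m|) = ∫ _ in (0 : ℝ)..φ, 1 / √(1 + |m|) := by simp [div_eq_mul_inv]
    _ ≤ amF m φ := intervalIntegral.integral_mono_on hφ intervalIntegrable_const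
        ((continuous_amF_integrand hm).intervalIntegrable _ _) fun t _ => hbound t

theorem amF_surjective (hm : m < 1) : Function.Surjective (amF m) := by
  have hc : 0 < √(1 + |m|) := sqrt_pos.2 (by positivity)
  have hcont : Continuous (amF m) :=
    continuous_iff_continuousAt.2 fun φ => (hasDerivAt_amF hm φ).continuousAt
  refine hcont.surjective ?_ ?_
  · exact tendsto_atTop_mono' _
      (eventually_atTop.2 ⟨0, fun φ => div_sqrt_one_add_abs_le_amF hm⟩)
      (tendsto_id.atTop_div_const hc)
  · refine tendsto_atBot_mono' _ (eventually_atBot.2 ⟨0, fun φ hφ => ?_⟩)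
      (tendsto_id.atBot_div_const hc)
    have := div_sqrt_one_add_abs_le_amF hm (neg_nonneg.2 hφ)
    rw [amF_neg, neg_div] at this
    exact neg_le_neg_iff.1 this

theorem amF_am (hm : m < 1) (u : ℝ) : amF m (am m u) = u :=
  Function.rightInverse_invFun (amF_surjective hm) u

theorem am_amF (hm : m < 1) (φ : ℝ) : am m (amF m φ) = φ :=
  Function.leftInverse_invFun (amF_strictMono hm).injective φ

theorem am_zero (hm : m < 1) : am m 0 = 0 := by
  simpa [amF] using am_amF hm 0

theorem continuous_am (hm : m < 1) : Continuous (am m) := by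
  let e := StrictMono.orderIsoOfSurjective (amF m) (amF_strictMono hm) (amF_surjective hm)
  have he : am m = e.symm := funext fun u => (amF_strictMono hm).injective <| by
    rw [amF_am hm]
    exact (StrictMono.orderIsoOfSurjective_self_symm_apply _ _ _ u).symm
  exact he ▸ e.symm.continuous

theorem dn_pos (hm : m < 1) (u : ℝ) : 0 < dn u m :=
  sqrt_pos.2 (one_sub_mul_sin_sq_pos hm _)

theorem hasDerivAt_am (hm : m < 1) (u : ℝ) : HasDerivAt (am m) (dn u m) u := by
  refine ((hasDerivAt_amF hm (am m u)).of_local_left_inverse (continuous_am hm).continuousAt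
    (one_div_pos.2 (dn_pos hm u)).ne' (.of_forall (amF_am hm))).congr_deriv ?_
  rw [one_div, inv_inv]
  rfl

end Amplitude

section Jacobi

variable {m : ℝ}

theorem sn_sq_add_cn_sq (u : ℝ) : sn u m ^ 2 + cn u m ^ 2 = 1 :=
  sin_sq_add_cos_sq _

theorem dn_sq (hm : m < 1) (u : ℝ) : dn u m ^ 2 = 1 - m * sn u m ^ 2 :=
  sq_sqrt (one_sub_mul_sin_sq_pos hm _).le

theorem sn_zero (hm : m < 1) : sn 0 m = 0 := by simp [sn, am_zero hm]

theorem cn_zero (hm : m < 1) : cn 0 m = 1 := by simp [cn, am_zero hm]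

theorem dn_zero (hm : m < 1) : dn 0 m = 1 := by simp [dn, sn_zero hm]

theorem hasDerivAt_sn (hm : m < 1) (u : ℝ) :
    HasDerivAt (fun v => sn v m) (cn u m * dn u m) u :=
  (hasDerivAt_sin _).comp u (hasDerivAt_am hm u)

theorem hasDerivAt_cn (hm : m < 1) (u : ℝ) :
    HasDerivAt (fun v => cn v m) (-(sn u m * dn u m)) u :=
  ((hasDerivAt_cos _).comp u (hasDerivAt_am hm u)).congr_deriv (neg_mul _ _)

theorem hasDerivAt_dn (hm : m < 1) (u : ℝ) :
    HasDerivAt (fun v => dn v m) (-(m * sn u m * cn u m)) u := by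
  refine ((((hasDerivAt_sn hm u).pow 2).const_mul m).const_sub 1).sqrt
    (one_sub_mul_sin_sq_pos hm _).ne' |>.congr_deriv ?_
  change _ / (2 * dn u m) = _
  field_simp [(dn_pos hm u).ne']
  ring

end Jacobi

section Addition

variable {m : ℝ}

theorem one_sub_mul_sn_sq_mul_sn_sq_pos (hm : m < 1) (x y : ℝ) :
    0 < 1 - m * sn x m ^ 2 * sn y m ^ 2 := by
  rw [mul_assoc]
  exact one_sub_mul_pos_of_lt_one hm (by positivity)
    (mul_le_one₀ (sin_sq_le_one _) (sq_nonneg _) (sin_sq_le_one _))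

theorem hasDerivAt_one_sub_mul_sn_sq_mul_sn_sq (hm : m < 1) (θ t : ℝ) :
    HasDerivAt (fun s => 1 - m * sn s m ^ 2 * sn (s - θ) m ^ 2)
      (-(2 * m * sn t m * sn (t - θ) m *
        (cn t m * dn t m * sn (t - θ) m + sn t m * cn (t - θ) m * dn (t - θ) m))) t := by
  refine ((((hasDerivAt_sn hm t).pow 2).const_mul m).mul
    (((hasDerivAt_sn hm _).comp_sub_const t θ).pow 2)).const_sub 1 |>.congr_deriv ?_
  simp only [Pi.pow_apply, Nat.cast_ofNat, Nat.add_one_sub_one, pow_one]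
  ring

theorem sn_sub (hm : m < 1) (x y : ℝ) :
    sn (x - y) m * (1 - m * sn x m ^ 2 * sn y m ^ 2)
      = sn x m * cn y m * dn y m - sn y m * cn x m * dn x m := by
  have key := mul_eq_mul_of_wronskian_eq_zero
    (fun t => (((hasDerivAt_sn hm t).mul ((hasDerivAt_cn hm _).comp_sub_const t (x - y))).mul
        ((hasDerivAt_dn hm _).comp_sub_const t (x - y))).sub
      ((((hasDerivAt_sn hm _).comp_sub_const t (x - y)).mul (hasDerivAt_cn hm t)).mul
        (hasDerivAt_dn hm t)))
    (hasDerivAt_one_sub_mul_sn_sq_mul_sn_sq hm (x - y))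
    (fun t => (one_sub_mul_sn_sq_mul_sn_sq_pos hm t (t - (x - y))).ne')
    (fun t => by
      simp only [Pi.mul_apply, Pi.sub_apply]
      grind [sn_sq_add_cn_sq, dn_sq hm]) x (x - y)
  simpa [sn_zero hm, cn_zero hm, dn_zero hm] using key.symm

theorem cn_sub (hm : m < 1) (x y : ℝ) :
    cn (x - y) m * (1 - m * sn x m ^ 2 * sn y m ^ 2)
      = cn x m * cn y m + sn x m * sn y m * dn x m * dn y m := by
  have key := mul_eq_mul_of_wronskian_eq_zero
    (fun t => ((hasDerivAt_cn hm t).mul ((hasDerivAt_cn hm _).comp_sub_const t (x - y))).add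
      ((((hasDerivAt_sn hm t).mul ((hasDerivAt_sn hm _).comp_sub_const t (x - y))).mul
        (hasDerivAt_dn hm t)).mul ((hasDerivAt_dn hm _).comp_sub_const t (x - y))))
    (hasDerivAt_one_sub_mul_sn_sq_mul_sn_sq hm (x - y))
    (fun t => (one_sub_mul_sn_sq_mul_sn_sq_pos hm t (t - (x - y))).ne')
    (fun t => by
      simp only [Pi.mul_apply, Pi.add_apply]
      grind [sn_sq_add_cn_sq, dn_sq hm]) x (x - y)
  simpa [sn_zero hm, cn_zero hm, dn_zero hm] using key.symm

theorem one_add_cn_sub_mul_cn_sub_cn (hm : m < 1) (x y : ℝ) :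
    (1 + cn (x - y) m) * (cn y m - cn x m)
      = sn (x - y) m * (sn x m * dn y m + sn y m * dn x m) := by
  refine mul_right_cancel₀ (one_sub_mul_sn_sq_mul_sn_sq_pos hm x y).ne' ?_
  linear_combination (cn y m - cn x m) * cn_sub hm x y
    - (sn x m * dn y m + sn y m * dn x m) * sn_sub hm x y
    - cn y m * sn_sq_add_cn_sq (m := m) x + cn x m * sn_sq_add_cn_sq (m := m) y
    + cn x m * sn y m ^ 2 * dn_sq hm x - sn x m ^ 2 * cn y m * dn_sq hm y

end Addition

/-- The key addition-formula identity behind the kernel property of the functions `g`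
for the Kasteleyn operator on the Fisher graph: with `θ = (β-α)/2`,
`(1 + cn θ)(cn((u-β)/2) - cn((u-α)/2))
  = sn θ (sn((u-α)/2) dn((u-β)/2) + sn((u-β)/2) dn((u-α)/2))`. -/
theorem fisher_kernel_identity (k : ℝ) (hk : k ^ 2 < 1) (u α β : ℝ) :
    (1 + cn ((β - α) / 2) (k ^ 2)) *
        (cn ((u - β) / 2) (k ^ 2) - cn ((u - α) / 2) (k ^ 2))
      = sn ((β - α) / 2) (k ^ 2) *
          (sn ((u - α) / 2) (k ^ 2) * dn ((u - β) / 2) (k ^ 2) +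
            sn ((u - β) / 2) (k ^ 2) * dn ((u - α) / 2) (k ^ 2)) := by
  rw [show (β - α) / 2 = (u - α) / 2 - (u - β) / 2 by ring]
  exact one_add_cn_sub_mul_cn_sub_cn hk _ _
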